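/- Suppose θ > 0, T is an SPT of G rooted at s, and e₀ is an edge of T. Then for every vertex v that is not a descendant of y₀ in T, the tree path π_{s,v} from s to v in T is a shortest path in G'; in particular dist_{G'}(v) = dist_G(v) for every such v. -/

import Mathlib

namespace DynSPT

variable {V : Type*}

/-- The list of consecutive edges of a path given as a list of vertices. -/
def edgeList (l : List V) : List (V × V) := l.zip l.tail

/-- The length of a path with respect to the weight function `ω`. -/
def len (ω : V → V → ℝ) (l : List V) : ℝ :=
  ((edgeList l).map fun p => ω p.1 p.2).sum

/-- `l` is a path in the directed graph with edge relation `E`. -/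
def IsWalk (E : V → V → Prop) (l : List V) : Prop := l ≠ [] ∧ l.Chain' E

/-- `l` is a path from `u` to `v` in the directed graph with edge relation `E`. -/
def IsWalkFrom (E : V → V → Prop) (l : List V) (u v : V) : Prop :=
  IsWalk E l ∧ l.head? = some u ∧ l.getLast? = some v

/-- The path `l` traverses the edge `e`. -/
def Traverses (l : List V) (e : V × V) : Prop := e ∈ edgeList l

/-- `l` is a cycle: a path with at least one edge whose first and last vertices agree. -/
def IsCycle (E : V → V → Prop) (l : List V) : Prop :=
  ∃ v, IsWalkFrom E l v v ∧ 2 ≤ l.length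

/-- The weighted directed graph `(E, ω)` has a negative cycle. -/
def HasNegCycle (E : V → V → Prop) (ω : V → V → ℝ) : Prop :=
  ∃ l, IsCycle E l ∧ len ω l < 0

/-- The weighted directed graph `(E, ω)` has a zero-length cycle. -/
def HasZeroCycle (E : V → V → Prop) (ω : V → V → ℝ) : Prop :=
  ∃ l, IsCycle E l ∧ len ω l = 0

/-- The distance from `s` to `v`: the infimum of the lengths of paths from `s` to `v`. -/
noncomputable def dist (E : V → V → Prop) (ω : V → V → ℝ) (s v : V) : ℝ :=
  sInf {L : ℝ | ∃ l, IsWalkFrom E l s v ∧ len ω l = L}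

/-- A spanning tree of the directed graph `E` rooted at `s`, recorded by the parent
function together with, for every vertex `v`, the tree path from `s` to `v`. -/
structure RootedTree (E : V → V → Prop) (s : V) where
  parent : V → V
  path : V → List V
  path_root : path s = [s]
  parent_edge : ∀ v, v ≠ s → E (parent v) v
  path_eq : ∀ v, v ≠ s → path v = path (parent v) ++ [v]
  path_isWalkFrom : ∀ v, IsWalkFrom E (path v) s v

/-- `(a, b)` is an edge of the rooted tree `T`. -/
def RootedTree.IsEdge {E : V → V → Prop} {s : V} (T : RootedTree E s) (a b : V) : Prop :=
  b ≠ s ∧ T.parent b = a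

/-- `T` is a shortest-path tree for the weight function `ω`:
every tree path from the root is a shortest path. -/
def IsSPT {E : V → V → Prop} {s : V} (ω : V → V → ℝ) (T : RootedTree E s) : Prop :=
  ∀ v, len ω (T.path v) = dist E ω s v

lemma len_nil (ω : V → V → ℝ) : len ω ([] : List V) = 0 := by simp [len, edgeList]

lemma len_singleton (ω : V → V → ℝ) (a : V) : len ω [a] = 0 := by simp [len, edgeList]

lemma len_cons_cons (ω : V → V → ℝ) (a b : V) (t : List V) :
    len ω (a :: b :: t) = ω a b + len ω (b :: t) := by
  simp [len, edgeList]

lemma len_append (ω : V → V → ℝ) : ∀ (l₁ : List V) (x : V) (l₂ : List V),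
    l₁.getLast? = some x → len ω (l₁ ++ l₂) = len ω l₁ + len ω (x :: l₂)
  | [], x, l₂, h => by simp at h
  | [a], x, l₂, h => by
      simp only [List.getLast?_singleton, Option.some.injEq] at h
      subst h
      simp [len_singleton]
  | a :: b :: t, x, l₂, h => by
      rw [List.getLast?_cons_cons] at h
      have ih := len_append ω (b :: t) x l₂ h
      simp only [List.cons_append] at *
      rw [len_cons_cons, len_cons_cons, ih]
      ring

lemma len_append_cons (ω : V → V → ℝ) (a : List V) (x : V) (r : List V) :
    len ω (a ++ x :: r) = len ω (a ++ [x]) + len ω (x :: r) := by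
  have h := len_append ω (a ++ [x]) x r (by simp)
  simpa using h

lemma cycle_nonneg {E : V → V → Prop} {ω : V → V → ℝ} (hG : ¬ HasNegCycle E ω)
    {l : List V} (hl : IsCycle E l) : 0 ≤ len ω l :=
  le_of_not_gt fun h => hG ⟨l, hl, h⟩

lemma exists_dup_split : ∀ {l : List V}, ¬ l.Nodup →
    ∃ (x : V) (a b c : List V), l = a ++ x :: b ++ x :: c := by
  intro l
  induction l with
  | nil => simp
  | cons h t ih =>
    intro hnd
    rw [List.nodup_cons] at hnd
    by_cases hm : h ∈ t
    · obtain ⟨b, c, rfl⟩ := List.append_of_mem hm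
      exact ⟨h, [], b, c, rfl⟩
    · have ht : ¬ t.Nodup := by tauto
      obtain ⟨x, a, b, c, rfl⟩ := ih ht
      exact ⟨x, h :: a, b, c, rfl⟩

lemma exists_nodup_walk {E : V → V → Prop} {ω : V → V → ℝ} (hG : ¬ HasNegCycle E ω)
    {s v : V} :
    ∀ (n : ℕ) (l : List V), l.length ≤ n → IsWalkFrom E l s v →
      ∃ l', IsWalkFrom E l' s v ∧ l'.Nodup ∧ len ω l' ≤ len ω l := by
  intro n
  induction n with
  | zero =>
    intro l hlen hw
    exact absurd (List.length_eq_zero_iff.mp (Nat.le_zero.mp hlen)) hw.1.1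
  | succ n ih =>
    intro l hlen hw
    by_cases hnd : l.Nodup
    · exact ⟨l, hw, hnd, le_refl _⟩
    obtain ⟨x, a, b, c, rfl⟩ := exists_dup_split hnd
    rw [show a ++ x :: b ++ x :: c = a ++ (x :: (b ++ x :: c)) from by simp] at hlen hw ⊢
    obtain ⟨⟨-, hchain⟩, hhead, hlast⟩ := hw
    -- decompose the chain
    have hsplit : x :: (b ++ x :: c) = (x :: b) ++ (x :: c) := by simp
    rw [List.Chain', List.isChain_append] at hchain
    obtain ⟨hca, hc2, hlink⟩ := hchain
    rw [hsplit, List.isChain_append] at hc2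
    obtain ⟨hcxb, hcxc, hlink2⟩ := hc2
    -- the removed cycle
    have hcyc : IsCycle E ((x :: b) ++ [x]) := by
      refine ⟨x, ⟨⟨by simp, ?_⟩, by simp,
        by rw [show x :: b ++ [x] = (x :: b) ++ (x :: []) from rfl, List.getLast?_append_cons]; rfl⟩,
        by simp⟩
      rw [List.Chain', List.isChain_append]
      refine ⟨hcxb, List.isChain_singleton x, ?_⟩
      intro p hp q hq
      simp only [List.head?_cons, Option.mem_def, Option.some.injEq] at hq
      subst hq
      exact hlink2 p hp x (by simp)
    have hcyc_nonneg : 0 ≤ len ω ((x :: b) ++ [x]) := cycle_nonneg hG hcyc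
    -- the shortened walk
    set l' : List V := a ++ x :: c with hl'
    have hw' : IsWalkFrom E l' s v := by
      refine ⟨⟨by simp [hl'], ?_⟩, ?_, ?_⟩
      · rw [hl', List.Chain', List.isChain_append]
        refine ⟨hca, hcxc, ?_⟩
        intro p hp q hq
        simp only [List.head?_cons, Option.mem_def, Option.some.injEq] at hq
        subst hq
        exact hlink p hp x (by simp)
      · rw [hl']
        cases a with
        | nil => simpa using hhead
        | cons p q => simpa using hhead
      · rw [hl', List.getLast?_append_cons]
        rw [List.getLast?_append_cons, hsplit, List.getLast?_append_cons] at hlast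
        exact hlast
    have hlenle : len ω l' ≤ len ω (a ++ x :: (b ++ x :: c)) := by
      have h1 : len ω (a ++ x :: (b ++ x :: c)) =
          len ω (a ++ [x]) + len ω (x :: (b ++ x :: c)) := len_append_cons ω a x _
      have h2 : len ω ((x :: b) ++ x :: c) =
          len ω ((x :: b) ++ [x]) + len ω (x :: c) := len_append_cons ω (x :: b) x c
      have h4 : x :: (b ++ x :: c) = (x :: b) ++ x :: c := by simp
      have h3 : len ω l' = len ω (a ++ [x]) + len ω (x :: c) := len_append_cons ω a x c
      have h5 : len ω (x :: b ++ [x]) = len ω ((x :: b) ++ [x]) := by simp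
      rw [h1, h4, h2, h3]
      rw [h5] at hcyc_nonneg
      linarith
    have hlen' : l'.length ≤ n := by
      simp only [hl', List.length_append, List.length_cons] at hlen ⊢
      omega
    obtain ⟨l'', h1, h2, h3⟩ := ih l' hlen' hw'
    exact ⟨l'', h1, h2, h3.trans hlenle⟩

lemma dist_le_len {V : Type*} [Fintype V] {E : V → V → Prop} {ω : V → V → ℝ}
    (hG : ¬ HasNegCycle E ω) {s v : V} {l : List V} (hl : IsWalkFrom E l s v) :
    dist E ω s v ≤ len ω l := by
  classical
  have hfin : (Set.range (fun p : {l : List V // l.Nodup} => len ω p.1)).Finite :=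
    Set.finite_range _
  obtain ⟨m, hm⟩ := hfin.bddBelow
  have hbdd : BddBelow {L : ℝ | ∃ l, IsWalkFrom E l s v ∧ len ω l = L} := by
    refine ⟨m, ?_⟩
    rintro L ⟨l₀, hl₀, rfl⟩
    obtain ⟨l', hw', hnd', hle'⟩ := exists_nodup_walk hG l₀.length l₀ le_rfl hl₀
    refine le_trans (hm ⟨⟨l', hnd'⟩, rfl⟩) hle'
  exact csInf_le hbdd ⟨l, hl, rfl⟩

theorem statement_4
    {V : Type*} [Fintype V] (E : V → V → Prop) (ω ω' : V → V → ℝ) (s x₀ y₀ : V)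
    (hE₀ : E x₀ y₀)
    (hreach : ∀ v, ∃ l, IsWalkFrom E l s v)
    (hω' : ∀ a b, (a, b) ≠ (x₀, y₀) → ω' a b = ω a b)
    (hG : ¬ HasNegCycle E ω)
    (hθ : 0 < ω' x₀ y₀ - ω x₀ y₀)
    (T : RootedTree E s) (hT : IsSPT ω T) (he₀ : T.IsEdge x₀ y₀) :
    ∀ v, y₀ ∉ T.path v →
      len ω' (T.path v) = dist E ω' s v ∧ dist E ω' s v = dist E ω s v := by
  intro v hy
  have hwf := T.path_isWalkFrom v
  -- On the tree path, the two weight functions agree, since it avoids y₀.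
  have hmem : ∀ p ∈ edgeList (T.path v), ω' p.1 p.2 = ω p.1 p.2 := by
    rintro ⟨pa, pb⟩ hp
    apply hω'
    intro hpe
    obtain ⟨h1, h2⟩ := List.of_mem_zip hp
    have hmemv : pb ∈ T.path v := List.mem_of_mem_tail h2
    have : pb = y₀ := (Prod.mk.injEq _ _ _ _).mp hpe |>.2
    exact hy (this ▸ hmemv)
  have hlen_eq : len ω' (T.path v) = len ω (T.path v) := by
    simp only [len]
    exact congrArg List.sum (List.map_congr_left hmem)
  -- ω ≤ ω' pointwise on edges, hence on path lengths.
  have hmono : ∀ l : List V, len ω l ≤ len ω' l := by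
    intro l
    apply List.sum_le_sum
    rintro ⟨pa, pb⟩ _
    by_cases h : (pa, pb) = (x₀, y₀)
    · obtain ⟨h1, h2⟩ := (Prod.mk.injEq _ _ _ _).mp h
      subst h1; subst h2
      linarith
    · rw [hω' _ _ h]
  have hlow : ∀ L ∈ {L : ℝ | ∃ l, IsWalkFrom E l s v ∧ len ω' l = L}, dist E ω s v ≤ L := by
    rintro L ⟨l, hl, rfl⟩
    exact (dist_le_len hG hl).trans (hmono l)
  have hne' : Set.Nonempty {L : ℝ | ∃ l, IsWalkFrom E l s v ∧ len ω' l = L} := by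
    obtain ⟨l, hl⟩ := hreach v
    exact ⟨len ω' l, l, hl, rfl⟩
  have h1 : dist E ω s v ≤ dist E ω' s v := le_csInf hne' hlow
  have hbdd' : BddBelow {L : ℝ | ∃ l, IsWalkFrom E l s v ∧ len ω' l = L} :=
    ⟨dist E ω s v, hlow⟩
  have h2 : dist E ω' s v ≤ len ω' (T.path v) := csInf_le hbdd' ⟨T.path v, hwf, rfl⟩
  have h3 : len ω (T.path v) = dist E ω s v := hT v
  have h4 : dist E ω' s v = dist E ω s v := by
    refine le_antisymm ?_ h1
    calc dist E ω' s v ≤ len ω' (T.path v) := h2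
      _ = len ω (T.path v) := hlen_eq
      _ = dist E ω s v := h3
  exact ⟨by rw [hlen_eq, h3, h4], h4⟩


end DynSPT
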